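/- For every fixed integer k ≥ 2, R_ℓ(rK_2, k) = 2r + o(r) as r → ∞; that is, for every ε > 0 there exists r_0 such that for all integers r ≥ r_0, 2r ≤ R_ℓ(rK_2, k) ≤ (2 + ε)·r. -/

import Mathlib

/-!
A monochromatic `rK₂` has `2r` vertices, which gives the lower bound.

For the upper bound, suppose a colouring of `K_n` has no monochromatic `rK₂`. A maximum matching
of colour `x` then has at most `r - 1` edges, so its vertex set `T x` has at most `2r - 2`
vertices and meets every edge of colour `x`. Hence lists `L e` can be beaten only by a family
`T` of small sets such that every edge `e` meets `T x` for some `x ∈ L e`. Give every edge a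
uniformly random `k`-subset of a palette of `C` colours. Each colour misses `T x` on at least
`(n - 2r + 2).choose 2` edges, and `1 - t ≤ exp (-t)` bounds the probability that a fixed `T`
beats the lists by `exp (-Σₑ (fₑ.choose k) / C.choose k)`, where `fₑ` counts the colours whose
set misses `e`. For `n = 2r + r / d`, `d = ⌈1 / ε⌉` and `C = 10 k d²` this is below
`2 ^ (-n C)`, the reciprocal of the number of families, once `r` is large; a union bound then
yields lists that no colouring beats.
-/

/-- The matching `rK₂` consisting of `r` pairwise disjoint edges `{2i, 2i+1}`. -/
def matchingGraph (r : ℕ) : SimpleGraph (Fin (2 * r)) :=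
  SimpleGraph.fromRel (fun a b => (b : ℕ) = (a : ℕ) + 1 ∧ (a : ℕ) % 2 = 0)

/-- A colouring `c` of the edges of the complete graph on `Fin n` contains a
monochromatic copy of the graph `G`. -/
def HasMonoCopy {α β : Type*} (G : SimpleGraph α) {n : ℕ} (c : Sym2 (Fin n) → β) : Prop :=
  ∃ (f : α → Fin n) (x : β), Function.Injective f ∧
    ∀ a b, G.Adj a b → c s(f a, f b) = x

/-- The `k`-colour list Ramsey number of a graph `G`: the least `n` for which one can
assign a list of `k` colours to each edge of `K_n` so that every colouring of the edges
from these lists contains a monochromatic copy of `G`. -/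
noncomputable def listRamsey {α : Type*} (G : SimpleGraph α) (k : ℕ) : ℕ :=
  sInf { n : ℕ | ∃ L : Sym2 (Fin n) → Finset ℕ,
    (∀ e : Sym2 (Fin n), ¬ e.IsDiag → (L e).card = k) ∧
    ∀ c : Sym2 (Fin n) → ℕ, (∀ e : Sym2 (Fin n), ¬ e.IsDiag → c e ∈ L e) →
      HasMonoCopy G c }

open Finset

theorem Nat.succ_le_add_choose {k : ℕ} (hk : 1 ≤ k) : ∀ a : ℕ, a + 1 ≤ k + a.choose k
  | 0 => by omega
  | a + 1 => by
    have ih := Nat.succ_le_add_choose hk a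
    obtain ⟨j, rfl⟩ : ∃ j, k = j + 1 := ⟨k - 1, by omega⟩
    rw [Nat.choose_succ_succ']
    rcases lt_or_ge a j with h | h
    · omega
    · have := Nat.choose_pos h
      omega

theorem Real.prod_sub_le_pow_mul_exp {ι : Type*} (s : Finset ι) {N : ℝ} (hN : 0 < N)
    {a : ι → ℝ} (ha : ∀ i ∈ s, a i ≤ N) :
    ∏ i ∈ s, (N - a i) ≤ N ^ #s * Real.exp (-(∑ i ∈ s, a i) / N) := by
  calc ∏ i ∈ s, (N - a i) ≤ ∏ i ∈ s, N * Real.exp (-a i / N) := by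
        refine prod_le_prod (fun i hi => sub_nonneg.2 (ha i hi)) fun i _ => ?_
        have := Real.add_one_le_exp (-a i / N)
        calc N - a i = N * (-a i / N + 1) := by field_simp; ring
          _ ≤ N * Real.exp (-a i / N) := by gcongr
    _ = N ^ #s * Real.exp (-(∑ i ∈ s, a i) / N) := by
        rw [prod_mul_distrib, prod_const, ← Real.exp_sum, ← sum_div, sum_neg_distrib]

theorem Finset.exists_mem_forall_notMem_of_sum_card_lt {ι α : Type*} [DecidableEq α]
    {s : Finset α} {I : Finset ι} {t : ι → Finset α} (h : ∑ i ∈ I, #(t i) < #s) :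
    ∃ a ∈ s, ∀ i ∈ I, a ∉ t i := by
  obtain ⟨a, ha, hna⟩ := exists_mem_notMem_of_card_lt_card (card_biUnion_le.trans_lt h)
  exact ⟨a, ha, fun i hi hai => hna (mem_biUnion.2 ⟨i, hi, hai⟩)⟩

/-- `K_n` list-arrows `G`: `listRamsey G k` is the least `n` with this property. -/
def ListArrows {α : Type*} (G : SimpleGraph α) (k n : ℕ) : Prop :=
  ∃ L : Sym2 (Fin n) → Finset ℕ, (∀ e : Sym2 (Fin n), ¬ e.IsDiag → #(L e) = k) ∧
    ∀ c : Sym2 (Fin n) → ℕ, (∀ e : Sym2 (Fin n), ¬ e.IsDiag → c e ∈ L e) → HasMonoCopy G c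

section ListArrows

variable {α : Type*} {G : SimpleGraph α} {k n : ℕ}

theorem listRamsey_le_of_listArrows (h : ListArrows G k n) : listRamsey G k ≤ n :=
  Nat.sInf_le h

theorem card_le_of_listArrows [Fintype α] (hk : 1 ≤ k) (h : ListArrows G k n) :
    Fintype.card α ≤ n := by
  obtain ⟨L, hLk, hforce⟩ := h
  have hL : ∀ e : Sym2 (Fin n), ¬ e.IsDiag → (L e).Nonempty := fun e he =>
    card_pos.1 (by rw [hLk e he]; omega)
  classical
  obtain ⟨f, -, hf, -⟩ := hforce (fun e => if h : (L e).Nonempty then h.choose else 0)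
    fun e he => by simpa only [dif_pos (hL e he)] using (hL e he).choose_spec
  simpa using Fintype.card_le_of_injective f hf

theorem card_le_listRamsey [Fintype α] (hk : 1 ≤ k) (h : ListArrows G k n) :
    Fintype.card α ≤ listRamsey G k :=
  le_csInf ⟨n, h⟩ fun _ hm => card_le_of_listArrows hk hm

end ListArrows

theorem matchingGraph_adj_iff {r : ℕ} {a b : Fin (2 * r)} :
    (matchingGraph r).Adj a b ↔ a ≠ b ∧ (a : ℕ) / 2 = (b : ℕ) / 2 := by
  rw [matchingGraph, SimpleGraph.fromRel_adj, ne_eq, Fin.ext_iff]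
  omega

section MonoMatching

variable {V β : Type*}

def IsMonoMatching (c : Sym2 V → β) (x : β) (M : Finset (Sym2 V)) : Prop :=
  (∀ e ∈ M, ¬ e.IsDiag ∧ c e = x) ∧ (M : Set (Sym2 V)).Pairwise fun e f => ∀ v ∈ e, v ∉ f

theorem IsMonoMatching.insert [DecidableEq V] {c : Sym2 V → β} {x : β} {M : Finset (Sym2 V)}
    {e : Sym2 V} (hM : IsMonoMatching c x M) (he : ¬ e.IsDiag) (hce : c e = x)
    (hdisj : ∀ v ∈ e, ∀ f ∈ M, v ∉ f) : IsMonoMatching c x (insert e M) := by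
  refine ⟨fun f hf => ?_, ?_⟩
  · rcases mem_insert.1 hf with rfl | hf
    exacts [⟨he, hce⟩, hM.1 f hf]
  · rw [coe_insert, Set.pairwise_insert]
    exact ⟨hM.2, fun f hf _ => ⟨fun v hv => hdisj v hv f hf,
      fun v hvf hve => hdisj v hve f hf hvf⟩⟩

theorem IsMonoMatching.hasMonoCopy {n r : ℕ} {c : Sym2 (Fin n) → β} {x : β}
    {M : Finset (Sym2 (Fin n))} (hM : IsMonoMatching c x M) (hr : r ≤ #M) :
    HasMonoCopy (matchingGraph r) c := by
  let g : Fin r → Sym2 (Fin n) := fun i => (M.equivFin.symm (Fin.castLE hr i)).1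
  have hgM : ∀ i, g i ∈ M := fun i => (M.equivFin.symm _).2
  have hg : Function.Injective g :=
    Subtype.val_injective.comp (M.equivFin.symm.injective.comp (Fin.castLE_injective hr))
  let half : Fin (2 * r) → Fin r := fun t => ⟨t / 2, by omega⟩
  let f : Fin (2 * r) → Fin n := fun t =>
    if (t : ℕ) % 2 = 0 then (g (half t)).out.1 else Sym2.Mem.other (g (half t)).out_fst_mem
  have hf_mem : ∀ t, f t ∈ g (half t) := fun t => by
    by_cases ht : (t : ℕ) % 2 = 0
    · simpa [f, ht] using (g (half t)).out_fst_mem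
    · simpa [f, ht] using Sym2.other_mem (g (half t)).out_fst_mem
  have hf_ne : ∀ t t', t ≠ t' → half t = half t' → f t ≠ f t' := by
    intro t t' hne hhalf
    have hval : (t : ℕ) ≠ t' := Fin.val_ne_of_ne hne
    have hdiv : (t : ℕ) / 2 = t' / 2 := congrArg Fin.val hhalf
    have hother := Sym2.other_ne (hM.1 _ (hgM (half t'))).1 (g (half t')).out_fst_mem
    simp only [f, hhalf]
    split_ifs <;> omega
  refine ⟨f, x, fun t t' h => ?_, fun a b hab => ?_⟩
  · by_contra hne
    by_cases hhalf : half t = half t'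
    · exact hf_ne t t' hne hhalf h
    · exact hM.2 (hgM _) (hgM _) (hg.ne hhalf) _ (hf_mem t) (h ▸ hf_mem t')
  · obtain ⟨hne, hab⟩ := matchingGraph_adj_iff.1 hab
    have hhalf : half a = half b := Fin.ext hab
    have : g (half a) = s(f a, f b) :=
      (Sym2.mem_and_mem_iff (hf_ne a b hne hhalf)).1 ⟨hf_mem a, hhalf ▸ hf_mem b⟩
    rw [← this]
    exact (hM.1 _ (hgM _)).2

theorem exists_cover_of_not_hasMonoCopy {n r : ℕ} (c : Sym2 (Fin n) → β)
    (h : ¬ HasMonoCopy (matchingGraph r) c) :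
    ∃ T : β → Finset (Fin n), (∀ x, #(T x) ≤ 2 * r - 2) ∧
      ∀ e, ¬ e.IsDiag → ∃ v ∈ e, v ∈ T (c e) := by
  classical
  suffices ∀ x, ∃ S : Finset (Fin n), #S ≤ 2 * r - 2 ∧
      ∀ e, ¬ e.IsDiag → c e = x → ∃ v ∈ e, v ∈ S by
    choose T hT hcov using this
    exact ⟨T, hT, fun e he => hcov _ e he rfl⟩
  intro x
  obtain ⟨M, hM, hmax⟩ := exists_max_image (univ.filter (IsMonoMatching c x)) card
    ⟨∅, mem_filter.2 ⟨mem_univ _, by simp [IsMonoMatching]⟩⟩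
  replace hM := (mem_filter.1 hM).2
  have hMr : #M + 1 ≤ r := not_le.1 fun hr => h (hM.hasMonoCopy hr)
  refine ⟨M.biUnion Sym2.toFinset, ?_, fun e he hce => ?_⟩
  · calc #(M.biUnion Sym2.toFinset) ≤ ∑ e ∈ M, #e.toFinset := card_biUnion_le
      _ ≤ ∑ _e ∈ M, 2 := sum_le_sum fun e _ => by rw [Sym2.card_toFinset]; split_ifs <;> omega
      _ ≤ 2 * r - 2 := by rw [sum_const, smul_eq_mul]; omega
  · by_contra! hdisj
    have hins := hM.insert he hce fun v hv f hf hvf =>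
      hdisj v hv (mem_biUnion.2 ⟨f, hf, Sym2.mem_toFinset.2 hvf⟩)
    have hnot : e ∉ M := fun heM =>
      hdisj _ e.out_fst_mem (mem_biUnion.2 ⟨e, heM, Sym2.mem_toFinset.2 e.out_fst_mem⟩)
    have := hmax _ (mem_filter.2 ⟨mem_univ _, hins⟩)
    rw [card_insert_of_notMem hnot] at this
    omega

end MonoMatching

section ListCounting

variable {V κ : Type*} [Fintype V] [DecidableEq V] [Fintype κ]

def freeColours (T : κ → Finset V) (e : Sym2 V) : Finset κ :=
  univ.filter fun x => ∀ v ∈ e, v ∉ T x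

@[simp]
theorem mem_freeColours {T : κ → Finset V} {e : Sym2 V} {x : κ} :
    x ∈ freeColours T e ↔ ∀ v ∈ e, v ∉ T x := by
  simp [freeColours]

theorem card_powersetCard_filter_not_subset [DecidableEq κ] (k : ℕ) (s : Finset κ) :
    #((powersetCard k univ).filter fun A => ¬ A ⊆ s) =
      (Fintype.card κ).choose k - (#s).choose k := by
  have h : (powersetCard k univ).filter (· ⊆ s) = powersetCard k s := by
    ext A; simp [and_comm]
  rw [filter_not, card_sdiff_of_subset (filter_subset _ _), h, card_powersetCard,
    card_powersetCard, card_univ]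

theorem choose_card_le_card_filter_edges (S : Finset V) :
    (#S).choose 2 ≤ #(univ.filter fun e : {e : Sym2 V // ¬ e.IsDiag} => ∀ v ∈ e.1, v ∈ S) := by
  rw [← Fintype.card_coe S, ← Sym2.card_subtype_not_diag, ← card_univ]
  refine card_le_card_of_injOn
    (fun z => ⟨z.1.map Subtype.val, by rw [Sym2.isDiag_map Subtype.val_injective]; exact z.2⟩)
    (fun z _ => ?_) fun z _ z' _ h => Subtype.ext (Sym2.map.injective Subtype.val_injective
      (congrArg Subtype.val h))
  refine mem_coe.2 (mem_filter.2 ⟨mem_univ _, fun v hv => ?_⟩)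
  obtain ⟨a, -, rfl⟩ := Sym2.mem_map.1 hv
  exact a.2

theorem card_mul_choose_le_sum_card_freeColours {s : ℕ} (T : κ → Finset V)
    (hT : ∀ x, #(T x) ≤ s) :
    Fintype.card κ * (Fintype.card V - s).choose 2 ≤
      ∑ e : {e : Sym2 V // ¬ e.IsDiag}, #(freeColours T e.1) := by
  have hswap := sum_card_bipartiteAbove_eq_sum_card_bipartiteBelow
    (s := (univ : Finset {e : Sym2 V // ¬ e.IsDiag})) (t := (univ : Finset κ))
    (r := fun e x => ∀ v ∈ e.1, v ∉ T x)
  simp only [bipartiteAbove, bipartiteBelow] at hswap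
  simp only [freeColours]
  rw [hswap, ← smul_eq_mul, ← card_univ, ← sum_const]
  refine sum_le_sum fun x _ => ?_
  calc (Fintype.card V - s).choose 2 ≤ (#(T x)ᶜ).choose 2 := by
        rw [card_compl]; exact Nat.choose_le_choose 2 (Nat.sub_le_sub_left (hT x) _)
    _ ≤ _ := (choose_card_le_card_filter_edges _).trans_eq (by simp)

theorem card_mul_choose_add_le_sum_choose_card_freeColours {k s : ℕ} (hk : 1 ≤ k)
    (T : κ → Finset V) (hT : ∀ x, #(T x) ≤ s) :
    Fintype.card κ * (Fintype.card V - s).choose 2 + (Fintype.card V).choose 2 ≤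
      k * (Fintype.card V).choose 2 +
        ∑ e : {e : Sym2 V // ¬ e.IsDiag}, (#(freeColours T e.1)).choose k := by
  have hfree := card_mul_choose_le_sum_card_freeColours T hT
  have hchoose : ∑ e : {e : Sym2 V // ¬ e.IsDiag}, (#(freeColours T e.1) + 1) ≤
      ∑ e : {e : Sym2 V // ¬ e.IsDiag}, (k + (#(freeColours T e.1)).choose k) :=
    sum_le_sum fun e _ => Nat.succ_le_add_choose hk _
  simp only [sum_add_distrib, sum_const, card_univ, Sym2.card_subtype_not_diag,
    smul_eq_mul] at hchoose
  linarith

variable [DecidableEq κ]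

def coveredLists (k : ℕ) (T : κ → Finset V) :
    Finset ({e : Sym2 V // ¬ e.IsDiag} → Finset κ) :=
  Fintype.piFinset fun e => (powersetCard k univ).filter fun A => ¬ A ⊆ freeColours T e.1

theorem card_coveredLists (k : ℕ) (T : κ → Finset V) :
    #(coveredLists k T) = ∏ e : {e : Sym2 V // ¬ e.IsDiag},
      ((Fintype.card κ).choose k - (#(freeColours T e.1)).choose k) := by
  simp only [coveredLists, Fintype.card_piFinset, card_powersetCard_filter_not_subset]

theorem card_coveredLists_lt {k : ℕ} (hkκ : k ≤ Fintype.card κ) (T : κ → Finset V)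
    (hT : (Fintype.card κ).choose k * (Fintype.card V * Fintype.card κ) <
      ∑ e : {e : Sym2 V // ¬ e.IsDiag}, (#(freeColours T e.1)).choose k) :
    (#(coveredLists k T) : ℝ) < ((Fintype.card κ).choose k : ℝ) ^ (Fintype.card V).choose 2 *
      Real.exp (-(Fintype.card V * Fintype.card κ : ℝ)) := by
  set N := (Fintype.card κ).choose k
  set a : {e : Sym2 V // ¬ e.IsDiag} → ℕ := fun e => (#(freeColours T e.1)).choose k
  have hN : (0 : ℝ) < N := by exact_mod_cast Nat.choose_pos hkκ
  have ha : ∀ e, a e ≤ N := fun e => Nat.choose_le_choose k (card_le_univ _)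
  have hsum : (N : ℝ) * (Fintype.card V * Fintype.card κ) < ∑ e, (a e : ℝ) := by
    exact_mod_cast hT
  rw [card_coveredLists, Nat.cast_prod]
  calc ∏ e, ((N - a e : ℕ) : ℝ) = ∏ e, ((N : ℝ) - a e) :=
        prod_congr rfl fun e _ => Nat.cast_sub (ha e)
    _ ≤ (N : ℝ) ^ (Fintype.card V).choose 2 * Real.exp (-(∑ e, (a e : ℝ)) / N) := by
        rw [← Sym2.card_subtype_not_diag, ← card_univ]
        exact Real.prod_sub_le_pow_mul_exp _ hN fun e _ => by exact_mod_cast ha e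
    _ < (N : ℝ) ^ (Fintype.card V).choose 2 *
        Real.exp (-(Fintype.card V * Fintype.card κ : ℝ)) := by
        gcongr
        rw [neg_div, neg_lt_neg_iff, lt_div_iff₀ hN, mul_comm]
        exact hsum

theorem exists_lists_avoiding_small_covers {k s : ℕ} (hk : 1 ≤ k) (hkκ : k ≤ Fintype.card κ)
    (h : (Fintype.card κ).choose k * (Fintype.card V * Fintype.card κ) +
        k * (Fintype.card V).choose 2 <
      Fintype.card κ * (Fintype.card V - s).choose 2 + (Fintype.card V).choose 2) :
    ∃ L : {e : Sym2 V // ¬ e.IsDiag} → Finset κ, (∀ e, #(L e) = k) ∧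
      ∀ T : κ → Finset V, (∀ x, #(T x) ≤ s) → ∃ e, L e ⊆ freeColours T e.1 := by
  set lists :=
    Fintype.piFinset fun _ : {e : Sym2 V // ¬ e.IsDiag} => powersetCard k (univ : Finset κ)
  set covers := univ.filter fun T : κ → Finset V => ∀ x, #(T x) ≤ s
  set N := (Fintype.card κ).choose k
  set m := Fintype.card V * Fintype.card κ
  have hcovers : (#covers : ℝ) ≤ Real.exp m := by
    have : #covers ≤ 2 ^ m := by
      refine (card_filter_le _ _).trans_eq ?_
      rw [card_univ, Fintype.card_fun, Fintype.card_finset, ← pow_mul]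
    calc (#covers : ℝ) ≤ 2 ^ m := by exact_mod_cast this
      _ ≤ Real.exp 1 ^ m := by gcongr; linarith [Real.add_one_le_exp 1]
      _ = Real.exp m := by rw [← Real.exp_nat_mul, mul_one]
  have hsum : ∑ T ∈ covers, #(coveredLists k T) < #lists := by
    have hlists : #lists = N ^ (Fintype.card V).choose 2 := by
      simp only [lists, Fintype.card_piFinset, prod_const, card_powersetCard, card_univ,
        Sym2.card_subtype_not_diag, N]
    have hne : covers.Nonempty := ⟨fun _ => ∅, by simp [covers]⟩
    rw [← Nat.cast_lt (α := ℝ), Nat.cast_sum, hlists, Nat.cast_pow]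
    calc ∑ T ∈ covers, (#(coveredLists k T) : ℝ)
        < ∑ _T ∈ covers, (N : ℝ) ^ (Fintype.card V).choose 2 * Real.exp (-m) := by
          refine sum_lt_sum_of_nonempty hne fun T hT => ?_
          have := card_mul_choose_add_le_sum_choose_card_freeColours hk T (mem_filter.1 hT).2
          have hT : N * m < ∑ e : {e : Sym2 V // ¬ e.IsDiag}, (#(freeColours T e.1)).choose k := by
            omega
          exact_mod_cast card_coveredLists_lt hkκ T hT
      _ ≤ Real.exp m * ((N : ℝ) ^ (Fintype.card V).choose 2 * Real.exp (-m)) := by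
          rw [sum_const, nsmul_eq_mul]; gcongr
      _ = (N : ℝ) ^ (Fintype.card V).choose 2 := by
          rw [mul_left_comm, ← Real.exp_add, add_neg_cancel, Real.exp_zero, mul_one]
  obtain ⟨L, hL, hcov⟩ := exists_mem_forall_notMem_of_sum_card_lt hsum
  have hLk : ∀ e, L e ∈ powersetCard k univ := Fintype.mem_piFinset.1 hL
  refine ⟨L, fun e => (mem_powersetCard.1 (hLk e)).2, fun T hT => ?_⟩
  have := hcov T (mem_filter.2 ⟨mem_univ _, hT⟩)
  simp only [coveredLists, Fintype.mem_piFinset, mem_filter, not_forall, not_and, not_not] at this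
  obtain ⟨e, he⟩ := this
  exact ⟨e, he (hLk e)⟩

end ListCounting

theorem listArrows_matchingGraph {n r k C : ℕ} (hk : 1 ≤ k) (hkC : k ≤ C)
    (h : C.choose k * (n * C) + k * n.choose 2 < C * (n - (2 * r - 2)).choose 2 + n.choose 2) :
    ListArrows (matchingGraph r) k n := by
  obtain ⟨L, hLk, hL⟩ := exists_lists_avoiding_small_covers (V := Fin n) (κ := Fin C)
    (s := 2 * r - 2) hk (by simpa using hkC) (by simpa using h)
  refine ⟨fun e => if he : e.IsDiag then ∅ else (L ⟨e, he⟩).map Fin.valEmbedding,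
    fun e he => by simp [he, hLk], fun c hc => ?_⟩
  by_contra hno
  obtain ⟨T, hTcard, hTcov⟩ := exists_cover_of_not_hasMonoCopy c hno
  obtain ⟨e, he⟩ := hL (T ∘ Fin.val) fun x => hTcard x
  obtain ⟨x, hx, hxc⟩ : ∃ x ∈ L e, (x : ℕ) = c e.1 := by simpa [e.2] using hc e.1 e.2
  obtain ⟨v, hve, hvT⟩ := hTcov e.1 e.2
  exact mem_freeColours.1 (he hx) v hve (by rw [Function.comp_apply, hxc]; exact hvT)

/-- With `m = r / d` and palette size `C = 10 k d²`, `C m² > 10 k (r - d)²` beats the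
`(k - 1) n²` coming from `k * n.choose 2` (where `n ≤ 3r`) by a margin of order `r²` that
absorbs the terms linear in `r`. -/
theorem counting_inequality_of_large {k d N r : ℕ} (hk : 1 ≤ k) (hd : 1 ≤ d)
    (hr : 20 * k * d + 6 * N * (10 * k * d ^ 2) < r) :
    N * ((2 * r + r / d) * (10 * k * d ^ 2)) + k * (2 * r + r / d).choose 2 <
      10 * k * d ^ 2 * (r / d + 2).choose 2 + (2 * r + r / d).choose 2 := by
  set m := r / d
  set C := 10 * k * d ^ 2
  have hrm : r < d * (m + 1) := Nat.lt_mul_div_succ r hd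
  have hm : m ≤ r := Nat.div_le_self r d
  rw [← Nat.cast_lt (α := ℝ)]
  push_cast [Nat.cast_choose_two]
  have hkR : (1 : ℝ) ≤ k := by exact_mod_cast hk
  have hmR : (m : ℝ) ≤ r := by exact_mod_cast hm
  have hCR : (C : ℝ) = 10 * k * d ^ 2 := by simp only [C]; push_cast; ring
  have hrR : 20 * k * d + 6 * N * C < (r : ℝ) := by exact_mod_cast hr
  have hsq : ((r : ℝ) - d) ^ 2 < (d * m) ^ 2 := by
    have : (r : ℝ) < d * (m + 1) := by exact_mod_cast hrm
    have : (d : ℝ) ≤ r := by nlinarith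
    exact pow_lt_pow_left₀ (by linarith) (by linarith) two_ne_zero
  have hn : (2 * r + m : ℝ) * (2 * r + m - 1) ≤ 9 * r ^ 2 := by nlinarith
  have h1 : (N * C : ℝ) * (2 * r + m) ≤ N * C * (3 * r) := by gcongr; linarith
  have h2 : ((k : ℝ) - 1) * ((2 * r + m) * (2 * r + m - 1)) ≤ ((k : ℝ) - 1) * (9 * r ^ 2) := by
    gcongr
  have h3 : 10 * (k : ℝ) * (r - d) ^ 2 < 10 * k * (d * m) ^ 2 := by gcongr
  have h4 : (C : ℝ) * m ^ 2 ≤ C * ((m + 2) * (m + 1)) := by gcongr; nlinarith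
  have h5 : (20 * k * d + 6 * N * C : ℝ) * r ≤ r * r := by gcongr
  nlinarith [h1, h2, h3, h4, h5]

theorem eventually_listArrows_matchingGraph {k d : ℕ} (hk : 1 ≤ k) (hd : 1 ≤ d) :
    ∀ᶠ r in Filter.atTop, ListArrows (matchingGraph r) k (2 * r + r / d) := by
  set C := 10 * k * d ^ 2
  have hkC : k ≤ C := (show k ≤ 10 * k by omega).trans (Nat.le_mul_of_pos_right _ (by positivity))
  refine Filter.eventually_atTop.2
    ⟨20 * k * d + 6 * C.choose k * C + 1, fun r hr => listArrows_matchingGraph hk hkC ?_⟩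
  have hr1 : 1 ≤ r := by omega
  rw [show 2 * r + r / d - (2 * r - 2) = r / d + 2 by generalize r / d = m; omega]
  exact counting_inequality_of_large hk hd hr

theorem list_ramsey_matching_asymp_r (k : ℕ) (hk : 2 ≤ k) (ε : ℝ) (hε : 0 < ε) :
    ∃ r₀ : ℕ, ∀ r : ℕ, r₀ ≤ r →
      2 * r ≤ listRamsey (matchingGraph r) k ∧
      (listRamsey (matchingGraph r) k : ℝ) ≤ (2 + ε) * r := by
  set d := ⌈1 / ε⌉₊
  have hd : 1 ≤ d := Nat.one_le_iff_ne_zero.2 (by positivity)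
  obtain ⟨r₀, hr₀⟩ :=
    Filter.eventually_atTop.1 (eventually_listArrows_matchingGraph (k := k) (by omega) hd)
  refine ⟨r₀, fun r hr => ⟨by simpa using card_le_listRamsey (by omega) (hr₀ r hr), ?_⟩⟩
  have hdiv : ((r / d : ℕ) : ℝ) ≤ ε * r := by
    calc ((r / d : ℕ) : ℝ) ≤ r / d := Nat.cast_div_le
      _ ≤ r / (1 / ε) := by gcongr; exact Nat.le_ceil _
      _ = ε * r := by field_simp
  calc (listRamsey (matchingGraph r) k : ℝ) ≤ (2 * r + r / d : ℕ) := by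
        exact_mod_cast listRamsey_le_of_listArrows (hr₀ r hr)
    _ ≤ (2 + ε) * r := by push_cast; linarith
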